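/- arXiv:2107.06759 — 3 statements merged into one kernel-verified Lean document; each statement's English description precedes it below -/
import Mathlib

section
/- Let (A, λ_A) be an object of C_𝒪. Then depth A ≤ 1 ≤ dim A, where depth A is the depth of A as a module over itself and dim A is the Krull dimension of A. -/
open IsLocalRing CategoryTheory

noncomputable section

/-- The length of a module, defined as the Krull dimension of its lattice of submodules. -/
noncomputable def mLength (R M : Type) [Ring R] [AddCommGroup M] [Module R M] :
    WithBot ℕ∞ :=
  Order.krullDim (Submodule R M)

/-- The depth of a module over a local ring: the supremum of the lengths of
regular sequences on `M` consisting of elements of the maximal ideal. -/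
noncomputable def mDepth (A : Type) [CommRing A] [IsLocalRing A]
    (M : Type) [AddCommGroup M] [Module A M] : ℕ∞ :=
  sSup {n : ℕ∞ | ∃ rs : List A, (rs.length : ℕ∞) = n ∧
    (∀ x ∈ rs, x ∈ maximalIdeal A) ∧ RingTheory.Sequence.IsRegular M rs}

/-- The `𝒪`-module structure on an `A`-module killed by `ker lam`,
obtained through the isomorphism `A ⧸ ker lam ≃ 𝒪`. -/
noncomputable def oModule {𝒪 A : Type} [CommRing 𝒪] [CommRing A] (lam : A →+* 𝒪)
    (hs : Function.Surjective lam) (M : Type) [AddCommGroup M] [Module A M]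
    (h : Module.IsTorsionBySet A M (RingHom.ker lam : Set A)) : Module 𝒪 M :=
  letI := h.module
  Module.compHom M (RingHom.quotientKerEquivOfSurjective hs).symm.toRingHom

/-- The length over `𝒪` of an `A`-module killed by `ker lam`. -/
noncomputable def oLength {𝒪 A : Type} [CommRing 𝒪] [CommRing A] (lam : A →+* 𝒪)
    (hs : Function.Surjective lam) (M : Type) [AddCommGroup M] [Module A M]
    (h : Module.IsTorsionBySet A M (RingHom.ker lam : Set A)) : WithBot ℕ∞ :=
  letI := oModule lam hs M h
  mLength 𝒪 M

/-- `M` has finite length as an `𝒪`-module. -/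
def OFiniteLength {𝒪 A : Type} [CommRing 𝒪] [CommRing A] (lam : A →+* 𝒪)
    (hs : Function.Surjective lam) (M : Type) [AddCommGroup M] [Module A M]
    (h : Module.IsTorsionBySet A M (RingHom.ker lam : Set A)) : Prop :=
  letI := oModule lam hs M h
  IsFiniteLength 𝒪 M

/-- The rank over `𝒪` of an `A`-module killed by `ker lam`: the dimension over the
fraction field `K` of `𝒪` of the base change `K ⊗_𝒪 M`. -/
noncomputable def oRank {𝒪 A : Type} [CommRing 𝒪] [IsDomain 𝒪] [CommRing A] (lam : A →+* 𝒪)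
    (hs : Function.Surjective lam) (M : Type) [AddCommGroup M] [Module A M]
    (h : Module.IsTorsionBySet A M (RingHom.ker lam : Set A)) : Cardinal :=
  letI := oModule lam hs M h
  Module.rank (FractionRing 𝒪) (TensorProduct 𝒪 (FractionRing 𝒪) M)

lemma torsionBySet_torsion {A M : Type} [CommRing A] [AddCommGroup M] [Module A M]
    (s : Set A) : Module.IsTorsionBySet A (Submodule.torsionBySet A M s) s :=
  Submodule.torsionBySet_isTorsionBySet s

/-- The annihilator `A[J]` of an ideal `J` is killed by `J`. -/
lemma annihilator_torsion {A : Type} [CommRing A] (J : Ideal A) :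
    Module.IsTorsionBySet A (Submodule.annihilator J) (J : Set A) := by
  rintro ⟨x, hx⟩ ⟨a, ha⟩
  apply Subtype.ext
  have := (Submodule.mem_annihilator.mp hx) a ha
  simpa [smul_eq_mul, mul_comm] using this

lemma submodule_torsion {A M : Type} [CommRing A] [AddCommGroup M] [Module A M] {s : Set A}
    (h : Module.IsTorsionBySet A M s) (P : Submodule A M) :
    Module.IsTorsionBySet A P s := by
  rintro ⟨x, hx⟩ a
  apply Subtype.ext
  simpa using @h x a

lemma quotient_torsion {A M : Type} [CommRing A] [AddCommGroup M] [Module A M] {s : Set A}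
    (h : Module.IsTorsionBySet A M s) (P : Submodule A M) :
    Module.IsTorsionBySet A (M ⧸ P) s := by
  rintro x a
  obtain ⟨y, rfl⟩ := Submodule.Quotient.mk_surjective P x
  rw [← Submodule.Quotient.mk_smul, @h y a]
  rfl

lemma cotangent_torsion {A : Type} [CommRing A] {I : Ideal A} {s : Set A}
    (h : Module.IsTorsionBySet A I s) :
    Module.IsTorsionBySet A I.Cotangent s := by
  rintro x a
  obtain ⟨y, rfl⟩ := I.toCotangent_surjective x
  rw [← map_smul, @h y a, map_zero]

/-- The conormal module `I/I²` is killed by `I`. -/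
lemma conormal_torsion {A : Type} [CommRing A] (I : Ideal A) :
    Module.IsTorsionBySet A I.Cotangent (I : Set A) := by
  rintro x ⟨a, ha⟩
  obtain ⟨y, rfl⟩ := I.toCotangent_surjective x
  rw [← map_smul]
  refine (I.toCotangent_eq_zero _).mpr ?_
  have : ((a • y : I) : A) = a * (y : A) := rfl
  rw [this, pow_two]
  exact Ideal.mul_mem_mul ha y.2

/-- If `P` contains the `A[J]`-torsion of `M`, then `M ⧸ P` is killed by `J`;
in particular congruence modules `M/(M[𝔭] + M[I])` are killed by `𝔭`. -/
lemma quot_tors {A M : Type} [CommRing A] [AddCommGroup M] [Module A M] (J : Ideal A)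
    (P : Submodule A M)
    (hP : Submodule.torsionBySet A M ((Submodule.annihilator J : Ideal A) : Set A) ≤ P) :
    Module.IsTorsionBySet A (M ⧸ P) (J : Set A) := by
  rintro x ⟨a, ha⟩
  obtain ⟨y, rfl⟩ := Submodule.Quotient.mk_surjective P x
  rw [← Submodule.Quotient.mk_smul, Submodule.Quotient.mk_eq_zero]
  apply hP
  rw [Submodule.mem_torsionBySet_iff]
  rintro ⟨b, hb⟩
  have hba : b * a = 0 := (Submodule.mem_annihilator.mp hb) a ha
  calc b • a • y = (b * a) • y := (mul_smul b a y).symm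
  _ = 0 := by rw [hba, zero_smul]

/-- A commutative ring has finite self-injective dimension if `Ext^i(-, R)`
vanishes for all large `i`.  For a noetherian local ring this is
the Gorenstein condition. -/
def HasFiniteInjectiveDimension (A : Type) [CommRing A] : Prop :=
  ∃ n : ℕ, ∀ (M : ModuleCat A) (i : ℕ), n < i →
    Subsingleton (((Ext A (ModuleCat A) i).obj (Opposite.op M)).obj (ModuleCat.of A A))

/-- A noetherian local ring is regular if the dimension of its cotangent space
equals its Krull dimension. -/
def IsRegularLocal (R : Type) [CommRing R] [IsLocalRing R] [IsNoetherianRing R] : Prop :=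
  (Module.finrank (ResidueField R) (CotangentSpace R) : WithBot ℕ∞) = ringKrullDim R

/-- A noetherian local ring is a complete intersection if its completion at the
maximal ideal is isomorphic to a regular local ring modulo an ideal generated by a
regular sequence. -/
def IsCompleteIntersectionLocal (A : Type) [CommRing A] [IsLocalRing A] : Prop :=
  ∃ (R : Type) (_ : CommRing R) (_ : IsLocalRing R) (_ : IsNoetherianRing R) (rs : List R),
    IsRegularLocal R ∧ (∀ x ∈ rs, x ∈ maximalIdeal R) ∧
    RingTheory.Sequence.IsRegular R rs ∧
    Nonempty ((AdicCompletion (maximalIdeal A) A) ≃+* (R ⧸ Ideal.ofList rs))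

/-- The ideal `Γ_{𝔪}(A)` of elements killed by a power of the maximal ideal. -/
noncomputable def powerTorsionIdeal (A : Type) [CommRing A] [IsLocalRing A] : Ideal A :=
  ⨆ n : ℕ, Submodule.torsionBySet A A ((maximalIdeal A ^ n : Ideal A) : Set A)

end

/-! Let `𝔭 = ker λ`. The finite length module `𝔭/𝔭²` is killed by some `t ∉ 𝔭`, so `𝔭A_𝔭` is
idempotent, hence zero by Nakayama: `𝔭` is a minimal prime and some `s ≠ 0` kills it.
If `a, b` were a regular sequence in `𝔪`, then `a ∉ 𝔭`; a second Nakayama argument, applied to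
`Ann 𝔭`, gives `z ∉ (a)` with `𝔭z ⊆ (a)`, and as `A/𝔭 ≅ 𝒪` is a DVR, some `bⁿ` lies in
`(a) + 𝔭`, so `bⁿ` kills `z ≠ 0` in `A/(a)`. The bound `1 ≤ dim A` comes from `A ↠ 𝒪`. -/

theorem exists_ne_zero_forall_smul_eq_zero_of_isFiniteLength {R : Type*} [CommRing R]
    [IsDomain R] (hR : ¬ IsField R) {M : Type*} [AddCommGroup M] [Module R M]
    (hM : IsFiniteLength R M) :
    ∃ c : R, c ≠ 0 ∧ ∀ m : M, c • m = 0 := by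
  obtain ⟨_, _⟩ := isFiniteLength_iff_isNoetherian_isArtinian.mp hM
  have : Module.Finite R M := Module.IsNoetherian.finite R M
  have hTorsion : Module.IsTorsion R M := by
    intro m
    by_contra! hm
    have hinj : Function.Injective (LinearMap.toSpanSingleton R M m) := by
      refine (injective_iff_map_eq_zero _).mpr fun r hr => ?_
      by_contra hr0
      exact hm ⟨r, mem_nonZeroDivisors_of_ne_zero hr0⟩ hr
    -- otherwise `R ↪ M` would give `R` finite length, and an artinian domain is a field
    obtain ⟨_, _⟩ := isFiniteLength_iff_isNoetherian_isArtinian.mp (hM.of_injective hinj)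
    exact hR (IsArtinianRing.isField_of_isDomain R)
  obtain ⟨c, hc, hc0⟩ := Submodule.annihilator_top_inter_nonZeroDivisors hTorsion
  exact ⟨c, nonZeroDivisors.ne_zero hc0, fun m => Submodule.mem_annihilator.mp hc m trivial⟩

theorem oModule_smul {𝒪 A : Type} [CommRing 𝒪] [CommRing A] {lam : A →+* 𝒪}
    (hs : Function.Surjective lam) {M : Type} [AddCommGroup M] [Module A M]
    (h : Module.IsTorsionBySet A M (RingHom.ker lam : Set A)) (t : A) (x : M) :
    letI := oModule lam hs M h
    lam t • x = t • x := by
  let := h.module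
  have hmk : (RingHom.quotientKerEquivOfSurjective hs).symm (lam t) = Ideal.Quotient.mk _ t :=
    (RingEquiv.symm_apply_eq _).mpr (RingHom.kerLift_mk lam t).symm
  change (RingHom.quotientKerEquivOfSurjective hs).symm (lam t) • x = t • x
  rw [hmk]
  exact Module.IsTorsionBySet.mk_smul h t x

theorem exists_notMem_ker_forall_mul_mem_sq {𝒪 A : Type} [CommRing 𝒪] [IsDomain 𝒪]
    (h𝒪 : ¬ IsField 𝒪) [CommRing A] {lam : A →+* 𝒪} (hs : Function.Surjective lam)
    (hfin : OFiniteLength lam hs (RingHom.ker lam).Cotangent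
      (conormal_torsion (RingHom.ker lam))) :
    ∃ t ∉ RingHom.ker lam, ∀ p ∈ RingHom.ker lam, t * p ∈ RingHom.ker lam ^ 2 := by
  let := oModule lam hs (RingHom.ker lam).Cotangent (conormal_torsion (RingHom.ker lam))
  obtain ⟨c, hc0, hc⟩ := exists_ne_zero_forall_smul_eq_zero_of_isFiniteLength h𝒪 hfin
  obtain ⟨t, rfl⟩ := hs c
  refine ⟨t, hc0, fun p hp => ?_⟩
  have := hc ((RingHom.ker lam).toCotangent ⟨p, hp⟩)
  rw [oModule_smul, ← map_smul, Ideal.toCotangent_eq_zero] at this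
  exact this

theorem Ideal.exists_notMem_mul_eq_zero_of_mul_mem_sq {R : Type*} [CommRing R]
    [IsNoetherianRing R] {𝔭 : Ideal R} [𝔭.IsPrime] {t : R} (ht : t ∉ 𝔭)
    (htp : ∀ p ∈ 𝔭, t * p ∈ 𝔭 ^ 2) :
    ∀ p ∈ 𝔭, ∃ r ∉ 𝔭, r * p = 0 := by
  let L := Localization.AtPrime 𝔭
  have hidem : IsIdempotentElem (maximalIdeal L) := by
    refine le_antisymm Ideal.mul_le_right ?_
    rw [← Localization.AtPrime.map_eq_maximalIdeal, ← Ideal.map_mul, ← pow_two,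
      Ideal.map_le_iff_le_comap]
    intro p hp
    obtain ⟨u, hu⟩ := IsLocalization.map_units L (⟨t, ht⟩ : 𝔭.primeCompl)
    have htp' : algebraMap R L t * algebraMap R L p ∈ Ideal.map (algebraMap R L) (𝔭 ^ 2) := by
      rw [← map_mul]; exact Ideal.mem_map_of_mem _ (htp p hp)
    rw [Ideal.mem_comap, ← u.inv_mul_cancel_left (algebraMap R L p), hu]
    exact Ideal.mul_mem_left _ _ htp'
  have hbot : maximalIdeal L = ⊥ :=
    ((Ideal.isIdempotentElem_iff_eq_bot_or_top_of_isLocalRing _).mp hidem).resolve_right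
      (maximalIdeal.isMaximal L).ne_top
  intro p hp
  have h0 : algebraMap R L p = 0 := by
    rw [← Ideal.mem_bot, ← hbot, ← Localization.AtPrime.map_eq_maximalIdeal]
    exact Ideal.mem_map_of_mem _ hp
  obtain ⟨⟨r, hr⟩, hrp⟩ := (IsLocalization.map_eq_zero_iff 𝔭.primeCompl L p).mp h0
  exact ⟨r, hr, hrp⟩

theorem Ideal.exists_notMem_mem_annihilator {R : Type*} [CommRing R] [IsNoetherianRing R]
    {I 𝔭 : Ideal R} [𝔭.IsPrime] (h : ∀ p ∈ I, ∃ r ∉ 𝔭, r * p = 0) :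
    ∃ s ∉ 𝔭, s ∈ I.annihilator := by
  have hsupp : (⟨𝔭, inferInstance⟩ : PrimeSpectrum R) ∉ Module.support R I := by
    refine Module.notMem_support_iff'.mpr fun ⟨p, hp⟩ => ?_
    obtain ⟨r, hr, hrp⟩ := h p hp
    exact ⟨r, hr, Subtype.ext hrp⟩
  rw [Module.mem_support_iff_of_finite, SetLike.not_le_iff_exists] at hsupp
  obtain ⟨s, hs, hsker⟩ := hsupp
  refine ⟨s, hsker, Submodule.mem_annihilator.mpr fun p hp => ?_⟩
  simpa using congrArg Subtype.val (Module.mem_annihilator.mp hs ⟨p, hp⟩)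

theorem exists_notMem_span_singleton_forall_mul_mem {R : Type*} [CommRing R] [IsNoetherianRing R]
    {I : Ideal R} (hI : I.annihilator ≠ ⊥) {a : R} (ha : a ∈ (⊥ : Ideal R).jacobson)
    (hreg : IsSMulRegular R a) :
    ∃ z ∉ Ideal.span {a}, ∀ p ∈ I, p * z ∈ Ideal.span {a} := by
  -- otherwise every `h ∈ Ann I` is divisible by `a` with quotient again in `Ann I`,
  -- so `Ann I ≤ (a) • Ann I` and Nakayama gives `Ann I = 0`
  by_contra! hcon
  refine hI (Submodule.eq_bot_of_le_smul_of_le_jacobson_bot (Ideal.span {a}) _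
    (IsNoetherian.noetherian _) (fun h hh => ?_) (by rwa [Ideal.span_singleton_le_iff_mem]))
  have hIh : ∀ p ∈ I, p * h = 0 := fun p hp => by
    rw [mul_comm]; exact Submodule.mem_annihilator.mp hh p hp
  obtain ⟨h', rfl⟩ : a ∣ h := Ideal.mem_span_singleton.mp <| by
    by_contra hnot
    obtain ⟨p, hp, hph⟩ := hcon h hnot
    exact hph (by rw [hIh p hp]; exact Ideal.zero_mem _)
  have hh' : h' ∈ I.annihilator := Submodule.mem_annihilator.mpr fun p hp => hreg <| by
    simp only [smul_eq_mul, mul_zero]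
    linear_combination hIh p hp
  exact Submodule.smul_mem_smul (Ideal.mem_span_singleton_self a) hh'

open Pointwise in
theorem not_isSMulRegular_quotSMulTop_of_pow_mem {R : Type*} [CommRing R] [IsNoetherianRing R]
    {I : Ideal R} (hI : I.annihilator ≠ ⊥) {a : R} (ha : a ∈ (⊥ : Ideal R).jacobson)
    (hreg : IsSMulRegular R a) {b : R} {n : ℕ} (hb : b ^ n ∈ Ideal.span {a} ⊔ I) :
    ¬ IsSMulRegular (QuotSMulTop a R) b := by
  intro hbreg
  obtain ⟨z, hz, hIz⟩ := exists_notMem_span_singleton_forall_mul_mem hI ha hreg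
  obtain ⟨x, hx, q, hq, hxq⟩ := Submodule.mem_sup.mp hb
  have hbz : b ^ n * z ∈ Ideal.span {a} := by
    rw [← hxq, add_mul]
    exact Ideal.add_mem _ (Ideal.mul_mem_right _ _ hx) (hIz q hq)
  have hspan : a • (⊤ : Submodule R R) = Ideal.span {a} := by
    rw [← Submodule.ideal_span_singleton_smul, Ideal.smul_eq_mul, Ideal.mul_top]
  have hzero := (hbreg.pow n) (a₁ := Submodule.Quotient.mk z) (a₂ := 0) <| by
    show b ^ n • _ = b ^ n • _
    rw [smul_zero, ← Submodule.Quotient.mk_smul, Submodule.Quotient.mk_eq_zero, hspan]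
    exact hbz
  rw [Submodule.Quotient.mk_eq_zero, hspan] at hzero
  exact hz hzero

theorem IsDiscreteValuationRing.exists_dvd_pow {𝒪 : Type*} [CommRing 𝒪] [IsDomain 𝒪]
    [IsDiscreteValuationRing 𝒪] {x y : 𝒪} (hx : x ≠ 0) (hy : y ∈ IsLocalRing.maximalIdeal 𝒪) :
    ∃ n : ℕ, x ∣ y ^ n := by
  obtain ⟨ϖ, hϖ⟩ := IsDiscreteValuationRing.exists_irreducible 𝒪
  obtain ⟨n, u, rfl⟩ := IsDiscreteValuationRing.eq_unit_mul_pow_irreducible hx hϖ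
  rw [hϖ.maximalIdeal_eq, Ideal.mem_span_singleton] at hy
  exact ⟨n, (Units.mul_left_dvd).mpr (pow_dvd_pow_of_dvd hy n)⟩

theorem exists_pow_mem_span_singleton_sup_ker {A 𝒪 : Type*} [CommRing A] [IsLocalRing A]
    [CommRing 𝒪] [IsDomain 𝒪] [IsDiscreteValuationRing 𝒪] {lam : A →+* 𝒪}
    (hs : Function.Surjective lam) {a : A} (ha : a ∉ RingHom.ker lam) {b : A}
    (hb : b ∈ maximalIdeal A) : ∃ n : ℕ, b ^ n ∈ Ideal.span {a} ⊔ RingHom.ker lam := by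
  have := IsLocalHom.of_surjective lam hs
  obtain ⟨n, c, hc⟩ := IsDiscreteValuationRing.exists_dvd_pow ha (map_nonunit lam b hb)
  obtain ⟨c, rfl⟩ := hs c
  refine ⟨n, Submodule.mem_sup.mpr ⟨a * c, Ideal.mem_span_singleton'.mpr ⟨c, mul_comm c a⟩,
    b ^ n - a * c, ?_, add_sub_cancel _ _⟩⟩
  rw [RingHom.mem_ker, map_sub, map_mul, map_pow, hc, sub_self]

theorem mDepth_le_one_of_annihilator_ne_bot {R : Type} [CommRing R] [IsLocalRing R]
    [IsNoetherianRing R] {I : Ideal R} (hI : I.annihilator ≠ ⊥)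
    (hrad : ∀ a ∉ I, ∀ b ∈ maximalIdeal R, ∃ n : ℕ, b ^ n ∈ Ideal.span {a} ⊔ I) :
    mDepth R R ≤ 1 := by
  refine sSup_le ?_
  rintro _ ⟨rs, rfl, hmem, hreg⟩
  rcases rs with _ | ⟨a, _ | ⟨b, rs⟩⟩
  · simp
  · simp
  exfalso
  obtain ⟨ha, hab⟩ :=
    (RingTheory.Sequence.isWeaklyRegular_cons_iff R a _).mp hreg.toIsWeaklyRegular
  obtain ⟨hb, -⟩ := (RingTheory.Sequence.isWeaklyRegular_cons_iff _ b _).mp hab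
  have haI : a ∉ I := by
    obtain ⟨s, hs, hs0⟩ := (Submodule.ne_bot_iff _).mp hI
    refine fun haI => hs0 (ha ?_)
    change a * s = a * 0
    rw [mul_zero, mul_comm]
    exact Submodule.mem_annihilator.mp hs a haI
  obtain ⟨n, hn⟩ := hrad a haI b (hmem b (by simp))
  refine not_isSMulRegular_quotSMulTop_of_pow_mem hI ?_ ha hn hb
  rw [IsLocalRing.jacobson_eq_maximalIdeal ⊥ bot_ne_top]
  exact hmem a (by simp)

/-- For any object `(A, λ_A)` of the category `C_𝒪`
(so `A` is a commutative noetherian local ring, `λ_A : A → 𝒪` a surjective ring map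
to the discrete valuation ring `𝒪` whose conormal module `𝔭_A/𝔭_A²` has finite
length over `𝒪`), one has `depth A ≤ 1 ≤ dim A`. -/
theorem statement0
    (𝒪 : Type) [CommRing 𝒪] [IsDomain 𝒪] [IsDiscreteValuationRing 𝒪]
    (A : Type) [CommRing A] [IsLocalRing A] [IsNoetherianRing A]
    (lam : A →+* 𝒪) (hs : Function.Surjective lam)
    (hfin : OFiniteLength lam hs (RingHom.ker lam).Cotangent
      (conormal_torsion (RingHom.ker lam))) :
    mDepth A A ≤ 1 ∧ 1 ≤ ringKrullDim A := by
  obtain ⟨t, ht, htp⟩ :=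
    exists_notMem_ker_forall_mul_mem_sq (IsDiscreteValuationRing.not_isField 𝒪) hs hfin
  have := RingHom.ker_isPrime lam
  obtain ⟨s, hsker, hsann⟩ := Ideal.exists_notMem_mem_annihilator
    (Ideal.exists_notMem_mul_eq_zero_of_mul_mem_sq ht htp)
  have hann : (RingHom.ker lam).annihilator ≠ ⊥ :=
    (Submodule.ne_bot_iff _).mpr ⟨s, hsann, fun h => hsker (h ▸ zero_mem _)⟩
  refine ⟨mDepth_le_one_of_annihilator_ne_bot hann
    fun a ha b hb => exists_pow_mem_span_singleton_sup_ker hs ha hb, ?_⟩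
  calc (1 : WithBot ℕ∞)
    _ = ringKrullDim 𝒪 := (IsDiscreteValuationRing.ringKrullDim_eq_one 𝒪).symm
    _ ≤ ringKrullDim A := ringKrullDim_le_of_surjective lam hs
end

section
/- Let (A, λ_A) be an object of C_𝒪. Then the 𝒪-module I_A := A[𝔭_A] has rank one, i.e. I_A ⊗_A A_{𝔭_A} is a one-dimensional K-vector space; consequently λ_A(I_A) ≠ 0 and the congruence algebra Ψ_A := 𝒪/λ_A(I_A) has finite length as an 𝒪-module. -/
open IsLocalRing CategoryTheory

/-!
Over the discrete valuation ring `𝒪` every module of finite length is torsion, so the conormal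
module `𝔭/𝔭²` of `𝔭 = ker λ` vanishes at the generic point `𝔭`. Since
`Supp(𝔭/𝔭²) = Supp(𝔭) ∩ V(𝔭)`, the finitely generated module `𝔭` vanishes there too, which
gives `c ∉ 𝔭` with `c 𝔭 = 0`. Such a `c` lies in `I_A`, so `I_A` localizes to all of `A_𝔭`, and
`λ(c) ≠ 0` lies in `λ(I_A)`.
-/

theorem exists_ne_zero_smul_eq_zero_of_isArtinian {R M : Type*} [CommRing R] [IsDomain R]
    [AddCommGroup M] [Module R M] [IsArtinian R M] (hR : ¬IsField R) (x : M) :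
    ∃ r ≠ (0 : R), r • x = 0 := by
  by_contra! hx
  have : IsArtinianRing R := isArtinian_of_injective (LinearMap.toSpanSingleton R M x) <|
    (injective_iff_map_eq_zero _).mpr fun r hr ↦ by_contra fun hr0 ↦ hx r hr0 hr
  exact hR (IsArtinianRing.isField_of_isDomain R)

theorem oModule_lam_smul {𝒪 A : Type} [CommRing 𝒪] [CommRing A] (lam : A →+* 𝒪)
    (hs : Function.Surjective lam) (M : Type) [AddCommGroup M] [Module A M]
    (h : Module.IsTorsionBySet A M (RingHom.ker lam : Set A)) (t : A) (x : M) :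
    (letI := oModule lam hs M h; lam t • x) = t • x := by
  let := h.module
  let e := RingHom.quotientKerEquivOfSurjective hs
  show e.symm (e (Ideal.Quotient.mk _ t)) • x = t • x
  rw [e.symm_apply_apply]
  exact h.mk_smul t x

theorem notMem_support_of_oFiniteLength {𝒪 A : Type} [CommRing 𝒪] [IsDomain 𝒪] [CommRing A]
    (h𝒪 : ¬IsField 𝒪) (lam : A →+* 𝒪) (hs : Function.Surjective lam) (M : Type)
    [AddCommGroup M] [Module A M] (h : Module.IsTorsionBySet A M (RingHom.ker lam : Set A))
    (hfin : OFiniteLength lam hs M h) :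
    (⟨RingHom.ker lam, RingHom.ker_isPrime lam⟩ : PrimeSpectrum A) ∉ Module.support A M := by
  let := oModule lam hs M h
  have : IsArtinian 𝒪 M := (isFiniteLength_iff_isNoetherian_isArtinian.mp hfin).2
  refine Module.notMem_support_iff'.mpr fun x ↦ ?_
  obtain ⟨r, hr0, hrx⟩ := exists_ne_zero_smul_eq_zero_of_isArtinian h𝒪 x
  obtain ⟨t, rfl⟩ := hs r
  exact ⟨t, hr0, by rwa [oModule_lam_smul] at hrx⟩

theorem Ideal.annihilator_not_le_of_notMem_support_cotangent {A : Type} [CommRing A]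
    (p : PrimeSpectrum A) [Module.Finite A p.asIdeal]
    (h : p ∉ Module.support A p.asIdeal.Cotangent) :
    ¬Submodule.annihilator p.asIdeal ≤ p.asIdeal := by
  intro hle
  apply h
  change p ∈ Module.support A (p.asIdeal ⧸ (p.asIdeal • ⊤ : Submodule A p.asIdeal))
  rw [Module.support_quotient]
  exact ⟨Module.mem_support_iff_of_finite.mpr hle, (PrimeSpectrum.mem_zeroLocus _ _).mpr le_rfl⟩

theorem rank_localizedModule_eq_one_of_not_le {A : Type} [CommRing A] (P : Ideal A) [P.IsPrime]
    {I : Ideal A} (hI : ¬I ≤ P) :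
    Module.rank (Localization.AtPrime P) (LocalizedModule P.primeCompl I) = 1 := by
  let L := Localization.AtPrime P
  have htop : I.localized' L P.primeCompl (Algebra.linearMap A L) = ⊤ := by
    obtain ⟨c, hcI, hcP⟩ := Set.not_subset.mp hI
    rw [Ideal.localized'_eq_map]
    exact Ideal.eq_top_of_isUnit_mem _ (Ideal.mem_map_of_mem _ hcI)
      (IsLocalization.map_units L (⟨c, hcP⟩ : P.primeCompl))
  let e := (IsLocalizedModule.linearEquiv P.primeCompl (LocalizedModule.mkLinearMap P.primeCompl I)
    (I.toLocalized' L P.primeCompl (Algebra.linearMap A L))).extendScalarsOfIsLocalization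
      P.primeCompl L
  rw [e.rank_eq, htop, rank_top, Module.rank_self]

theorem isFiniteLength_quotient_of_ne_bot {R : Type*} [CommRing R] [IsDomain R]
    [IsPrincipalIdealRing R] {J : Ideal R} (hJ : J ≠ ⊥) :
    IsFiniteLength R (R ⧸ J) := by
  rw [← Submodule.IsPrincipal.span_singleton_generator J] at hJ ⊢
  exact isFiniteLength_quotient_span_singleton R <| mem_nonZeroDivisors_of_ne_zero fun h ↦
    hJ (by rw [h, Ideal.span_singleton_eq_bot])

theorem statement2_general
    (𝒪 : Type) [CommRing 𝒪] [IsDomain 𝒪] [IsDiscreteValuationRing 𝒪]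
    (A : Type) [CommRing A] [IsNoetherianRing A]
    (lam : A →+* 𝒪) (hs : Function.Surjective lam)
    (hfin : OFiniteLength lam hs (RingHom.ker lam).Cotangent
      (conormal_torsion (RingHom.ker lam))) :
    letI : (RingHom.ker lam).IsPrime := RingHom.ker_isPrime lam
    Module.rank (Localization.AtPrime (RingHom.ker lam))
      (LocalizedModule (RingHom.ker lam).primeCompl
        (Submodule.annihilator (RingHom.ker lam))) = 1 ∧
    Ideal.map lam (Submodule.annihilator (RingHom.ker lam)) ≠ ⊥ ∧
    IsFiniteLength 𝒪 (𝒪 ⧸ Ideal.map lam (Submodule.annihilator (RingHom.ker lam))) := by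
  let : (RingHom.ker lam).IsPrime := RingHom.ker_isPrime lam
  have hI := Ideal.annihilator_not_le_of_notMem_support_cotangent _ <|
    notMem_support_of_oFiniteLength (IsDiscreteValuationRing.not_isField 𝒪) lam hs _ _ hfin
  obtain ⟨c, hcI, hcP⟩ := Set.not_subset.mp hI
  have hne : Ideal.map lam (Submodule.annihilator (RingHom.ker lam)) ≠ ⊥ := fun hbot ↦
    hcP <| (Ideal.mem_bot.mp (hbot ▸ Ideal.mem_map_of_mem lam hcI) : lam c = 0)
  exact ⟨rank_localizedModule_eq_one_of_not_le _ hI, hne, isFiniteLength_quotient_of_ne_bot hne⟩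

/-- For an object `(A, λ_A)` of `C_𝒪`, the `𝒪`-module
`I_A := A[𝔭_A]` (the annihilator of `𝔭_A`) has rank one, i.e. its localization at
`𝔭_A` is a one-dimensional vector space over `A_{𝔭_A} (≅ K)`; consequently
`λ_A(I_A) ≠ 0` and the congruence algebra `Ψ_A = 𝒪/λ_A(I_A)` has finite length
over `𝒪`. -/
theorem statement2
    (𝒪 : Type) [CommRing 𝒪] [IsDomain 𝒪] [IsDiscreteValuationRing 𝒪]
    (A : Type) [CommRing A] [IsLocalRing A] [IsNoetherianRing A]
    (lam : A →+* 𝒪) (hs : Function.Surjective lam)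
    (hfin : OFiniteLength lam hs (RingHom.ker lam).Cotangent
      (conormal_torsion (RingHom.ker lam))) :
    letI : (RingHom.ker lam).IsPrime := RingHom.ker_isPrime lam
    Module.rank (Localization.AtPrime (RingHom.ker lam))
      (LocalizedModule (RingHom.ker lam).primeCompl
        (Submodule.annihilator (RingHom.ker lam))) = 1 ∧
    Ideal.map lam (Submodule.annihilator (RingHom.ker lam)) ≠ ⊥ ∧
    IsFiniteLength 𝒪 (𝒪 ⧸ Ideal.map lam (Submodule.annihilator (RingHom.ker lam))) :=
  statement2_general 𝒪 A lam hs hfin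
end

section
/- Let (A, λ_A) be an object of C_𝒪. Then 𝔭_A = A[I_A], i.e. the annihilator of I_A in A equals 𝔭_A. -/
/-! Since `𝔭/𝔭²` has finite length over the discrete valuation ring `𝒪`, it is killed by a lift
`s ∈ A` of a power of a uniformizer, i.e. `s𝔭 ⊆ 𝔭²`. As `𝔭` is finitely generated, Cayley–Hamilton
for multiplication by `s` on `𝔭` (the determinant trick) gives `t ≡ sⁿ mod 𝔭` with `t𝔭 = 0`. So
`t ∈ I_A` and `λ(t) ≠ 0`, and since `𝒪` is a domain everything killing `I_A` lies in `𝔭`. -/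

open IsLocalRing CategoryTheory

lemma oModule_smul_eq {𝒪 A : Type} [CommRing 𝒪] [CommRing A] (lam : A →+* 𝒪)
    (hs : Function.Surjective lam) (M : Type) [AddCommGroup M] [Module A M]
    (h : Module.IsTorsionBySet A M (RingHom.ker lam : Set A)) (a : A) (x : M) :
    letI := oModule lam hs M h
    lam a • x = a • x := by
  let := h.module
  have hsymm : (RingHom.quotientKerEquivOfSurjective hs).symm (lam a) = Ideal.Quotient.mk _ a :=
    (RingEquiv.symm_apply_eq _).mpr rfl
  change (RingHom.quotientKerEquivOfSurjective hs).symm (lam a) • x = a • x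
  rw [hsymm]
  exact h.mk_smul a x

theorem IsFiniteLength.exists_pow_smul_eq_zero {R M : Type} [CommRing R] [IsLocalRing R]
    [AddCommGroup M] [Module R M] (hM : IsFiniteLength R M) {r : R}
    (hr : r ∈ maximalIdeal R) : ∃ n : ℕ, ∀ x : M, r ^ n • x = 0 := by
  obtain ⟨_, _⟩ := isFiniteLength_iff_isNoetherian_isArtinian.mp hM
  obtain ⟨n, hn⟩ := IsArtinian.range_smul_pow_stabilizes M r
  set N : Submodule R M := LinearMap.range (r ^ n • LinearMap.id : M →ₗ[R] M)
  have hN : N ≤ maximalIdeal R • N := by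
    rintro _ ⟨y, rfl⟩
    obtain ⟨z, hz⟩ : r ^ n • y ∈ LinearMap.range (r ^ (n + 1) • LinearMap.id : M →ₗ[R] M) := by
      rw [← hn (n + 1) n.le_succ]
      exact ⟨y, rfl⟩
    simp only [LinearMap.smul_apply, LinearMap.id_apply] at hz ⊢
    rw [← hz, pow_succ', mul_smul]
    exact Submodule.smul_mem_smul hr ⟨z, rfl⟩
  have hN_bot : N = ⊥ :=
    Submodule.eq_bot_of_le_smul_of_le_jacobson_bot _ N (IsNoetherian.noetherian N) hN
      (jacobson_eq_maximalIdeal ⊥ bot_ne_top).ge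
  exact ⟨n, fun x => (Submodule.eq_bot_iff N).mp hN_bot _ ⟨x, rfl⟩⟩

theorem exists_apply_ne_zero_smul_eq_zero_of_oFiniteLength {𝒪 A : Type} [CommRing 𝒪]
    [IsDomain 𝒪] [IsDiscreteValuationRing 𝒪] [CommRing A] (lam : A →+* 𝒪)
    (hs : Function.Surjective lam) (M : Type) [AddCommGroup M] [Module A M]
    (h : Module.IsTorsionBySet A M (RingHom.ker lam : Set A))
    (hfin : OFiniteLength lam hs M h) :
    ∃ s : A, lam s ≠ 0 ∧ ∀ x : M, s • x = 0 := by
  let := oModule lam hs M h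
  obtain ⟨ϖ, hϖ⟩ := IsDiscreteValuationRing.exists_irreducible 𝒪
  obtain ⟨n, hn⟩ := IsFiniteLength.exists_pow_smul_eq_zero (R := 𝒪) hfin
    ((mem_maximalIdeal _).mpr hϖ.not_isUnit)
  obtain ⟨s, hs_eq⟩ := hs (ϖ ^ n)
  refine ⟨s, hs_eq ▸ pow_ne_zero n hϖ.ne_zero, fun x => ?_⟩
  rw [← oModule_smul_eq lam hs M h, hs_eq, hn x]

theorem Ideal.exists_mem_annihilator_sub_pow_mem {A : Type} [CommRing A] {I : Ideal A}
    (hI : I.FG) {s : A} (hs : ∀ x ∈ I, s * x ∈ I ^ 2) :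
    ∃ t ∈ Submodule.annihilator I, ∃ n : ℕ, t - s ^ n ∈ I := by
  have : Module.Finite A I := Module.Finite.iff_fg.mpr hI
  obtain ⟨p, hp, -, hpI, hp0⟩ :=
    LinearMap.exists_monic_and_natDegree_eq_and_coeff_mem_pow_and_aeval_eq_zero
      (R := A) (M := I) (algebraMap A (Module.End A I) s) I (by
        rintro _ ⟨y, rfl⟩
        have hy : I.toCotangent (s • y) = 0 := (I.toCotangent_eq_zero _).mpr (hs y y.2)
        rw [Ideal.toCotangent_apply] at hy
        exact (Submodule.Quotient.mk_eq_zero _).mp hy)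
  refine ⟨p.eval s, ?_, p.natDegree, ?_⟩
  · rw [Submodule.mem_annihilator]
    intro x hx
    have := LinearMap.congr_fun
      ((Polynomial.aeval_algebraMap_apply_eq_algebraMap_eval s p).symm.trans hp0) ⟨x, hx⟩
    exact congrArg Subtype.val this
  · rw [Polynomial.eval_eq_sum_range, Finset.sum_range_succ, hp.coeff_natDegree, one_mul,
      add_sub_cancel_right]
    refine Ideal.sum_mem _ fun k hk => Ideal.mul_mem_right _ _ ?_
    exact Ideal.pow_le_self (Nat.sub_ne_zero_of_lt (Finset.mem_range.mp hk)) (hpI k)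

theorem annihilator_annihilator_ker_eq_ker {A D : Type} [CommRing A] [CommRing D]
    [NoZeroDivisors D] (lam : A →+* D) {t : A} (ht : t ∈ Submodule.annihilator (RingHom.ker lam))
    (ht0 : lam t ≠ 0) :
    Submodule.annihilator
      (Submodule.annihilator (RingHom.ker lam) : Ideal A) = RingHom.ker lam := by
  refine le_antisymm (fun a ha => ?_) (fun x hx => ?_)
  · have hat : lam a * lam t = 0 := by
      rw [← map_mul, ← smul_eq_mul, Submodule.mem_annihilator.mp ha t ht, map_zero]
    exact (mul_eq_zero.mp hat).resolve_right ht0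
  · refine Submodule.mem_annihilator.mpr fun y hy => ?_
    rw [smul_eq_mul, mul_comm, ← smul_eq_mul]
    exact Submodule.mem_annihilator.mp hy x hx

theorem statement3_general
    (𝒪 : Type) [CommRing 𝒪] [IsDomain 𝒪] [IsDiscreteValuationRing 𝒪]
    (A : Type) [CommRing A] [IsNoetherianRing A]
    (lam : A →+* 𝒪) (hs : Function.Surjective lam)
    (hfin : OFiniteLength lam hs (RingHom.ker lam).Cotangent
      (conormal_torsion (RingHom.ker lam))) :
    Submodule.annihilator
      (Submodule.annihilator (RingHom.ker lam) : Ideal A) = RingHom.ker lam := by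
  obtain ⟨s, hs0, hsΦ⟩ := exists_apply_ne_zero_smul_eq_zero_of_oFiniteLength lam hs _ _ hfin
  have hs_sq : ∀ x ∈ RingHom.ker lam, s * x ∈ RingHom.ker lam ^ 2 := fun x hx =>
    ((RingHom.ker lam).toCotangent_eq_zero (s • ⟨x, hx⟩)).mp (by rw [map_smul, hsΦ])
  obtain ⟨t, ht, n, htn⟩ :=
    Ideal.exists_mem_annihilator_sub_pow_mem (IsNoetherian.noetherian _) hs_sq
  have ht0 : lam t ≠ 0 := by
    rw [← sub_add_cancel t (s ^ n), map_add, RingHom.mem_ker.mp htn, zero_add, map_pow]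
    exact pow_ne_zero n hs0
  exact annihilator_annihilator_ker_eq_ker lam ht ht0

/-- For an object `(A, λ_A)` of `C_𝒪`, with `𝔭_A = ker λ_A` and
`I_A = A[𝔭_A]` the annihilator of `𝔭_A`, one has `𝔭_A = A[I_A]`, i.e. the
annihilator of `I_A` equals `𝔭_A`. -/
theorem statement3
    (𝒪 : Type) [CommRing 𝒪] [IsDomain 𝒪] [IsDiscreteValuationRing 𝒪]
    (A : Type) [CommRing A] [IsLocalRing A] [IsNoetherianRing A]
    (lam : A →+* 𝒪) (hs : Function.Surjective lam)
    (hfin : OFiniteLength lam hs (RingHom.ker lam).Cotangent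
      (conormal_torsion (RingHom.ker lam))) :
    Submodule.annihilator
      (Submodule.annihilator (RingHom.ker lam) : Ideal A) = RingHom.ker lam :=
  statement3_general 𝒪 A lam hs hfin
end
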